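/- arXiv:1610.02107 — 2 statements merged into one kernel-verified Lean document; each statement's English description precedes it below -/
import Mathlib

section
/- An edge e of a signed graph that lies in at least one circle lies only in negative circles if and only if e is a balancing edge of the block containing it. -/
open SimpleGraph Finset

variable {V : Type*} [DecidableEq V]

/-- The sign (product of edge signs) of a finite set of edges. -/
def esign (σ : Sym2 V → ℤˣ) (s : Finset (Sym2 V)) : ℤˣ := ∏ e ∈ s, σ e

/-- The sign of a walk: the product of the signs of its edges. -/
def wsign (σ : Sym2 V → ℤˣ) {G : SimpleGraph V} {u v : V} (w : G.Walk u v) : ℤˣ :=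
  (w.edges.map σ).prod

/-- `s` is the edge set of a circle (cycle) of `G`. -/
def IsCircleOf (G : SimpleGraph V) (s : Finset (Sym2 V)) : Prop :=
  ∃ (a : V) (w : G.Walk a a), w.IsCycle ∧ w.edges.toFinset = s

/-- The signature obtained from `σ` by switching with `ζ`. -/
def switchSign (σ : Sym2 V → ℤˣ) (ζ : V → ℤˣ) : Sym2 V → ℤˣ :=
  fun e => Sym2.lift ⟨fun a b => ζ a * σ s(a, b) * ζ b, by
    intro a b
    simp only []
    rw [Sym2.eq_swap]
    simp [mul_comm, mul_assoc, mul_left_comm]⟩ e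

/-- `b` is a balancing edge: one can switch so that `b` is the unique negative edge. -/
def IsBalancingEdge (G : SimpleGraph V) (σ : Sym2 V → ℤˣ) (b : Sym2 V) : Prop :=
  b ∈ G.edgeSet ∧ ∃ ζ : V → ℤˣ, ∀ f ∈ G.edgeSet, (switchSign σ ζ f = -1 ↔ f = b)

/-- `F` is the edge set of a bridge of the circle `w` in `G`: either a single
chord of `w`, or the edge set attached to a connected component of `G` minus
the vertices of `w`. -/
def IsBridgeOf {a : V} (G : SimpleGraph V) (w : G.Walk a a) (F : Set (Sym2 V)) : Prop :=
  (∃ x y : V, x ≠ y ∧ x ∈ w.support ∧ y ∈ w.support ∧ G.Adj x y ∧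
      s(x, y) ∉ w.edges ∧ F = {s(x, y)}) ∨
  (∃ D : Set V, D.Nonempty ∧ (∀ x ∈ D, x ∉ w.support) ∧ (G.induce D).Connected ∧
      (∀ x ∈ D, ∀ y : V, G.Adj x y → y ∈ D ∨ y ∈ w.support) ∧
      F = {e | e ∈ G.edgeSet ∧ ∃ x ∈ D, x ∈ e})

/-- The vertices of attachment of a bridge with edge set `F`. -/
def attachments {a : V} (G : SimpleGraph V) (w : G.Walk a a) (F : Set (Sym2 V)) : Set V :=
  {x | x ∈ w.support ∧ ∃ e ∈ F, x ∈ e}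

/-- A path through a bridge: a path between two distinct vertices of attachment
all of whose edges lie in the bridge. -/
def IsPathThrough {a : V} (G : SimpleGraph V) (w : G.Walk a a) (F : Set (Sym2 V))
    {x y : V} (Q : G.Walk x y) : Prop :=
  x ≠ y ∧ x ∈ attachments G w F ∧ y ∈ attachments G w F ∧ Q.IsPath ∧
    ∀ e ∈ Q.edges, e ∈ F

/-- `G` is a block: it is connected and has no cutpoint. -/
def IsBlock (G : SimpleGraph V) : Prop :=
  G.Connected ∧ ∀ v : V, ((⊤ : G.Subgraph).deleteVerts {v}).coe.Connected

/-- The block of `G` containing the edge `e`: its edges are `e` together with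
all edges lying on a common circle with `e`. -/
def blockOf (G : SimpleGraph V) (e : Sym2 V) : SimpleGraph V where
  Adj x y := G.Adj x y ∧ (s(x, y) = e ∨ ∃ s : Finset (Sym2 V),
    IsCircleOf G s ∧ e ∈ s ∧ s(x, y) ∈ s)
  symm := by
    constructor
    intro x y ⟨hadj, h⟩
    refine ⟨hadj.symm, ?_⟩
    rwa [Sym2.eq_swap]
  loopless := by
    constructor
    intro x ⟨hadj, _⟩
    exact G.loopless.irrefl x hadj

/-!
Switching does not change the sign of a circle, and every circle through `e` lies in the block
of `e`; so if some switching makes `e` the only negative edge of the block, every circle through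
`e` is negative.

Conversely, write `e = ab` and let `H` be the block with `e` deleted. A circle through `e` is
`e` together with an `a`-`b` path avoiding `e`, so every such path `P` has `σ e * σ P = -1`. A
cycle `C` of `H` shares an edge with such a path `P`; replacing the stretch of `P` between its
first and last vertex on `C` by either arc of `C` gives two more such paths, whose signs
multiply to `σ C`, so `C` is positive. Hence signs of walks in `H` depend only on their ends,
and switching by the sign of walks from `a` in `H` makes `e` the unique negative edge.
-/

section SignedWalks

open Walk

variable {V : Type*} {G : SimpleGraph V} (σ : Sym2 V → ℤˣ)

lemma units_mul_self_mul (u v : ℤˣ) : u * (u * v) = v := by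
  rw [← mul_assoc, Int.units_mul_self, one_mul]

@[simp]
lemma wsign_nil {u : V} : wsign σ (nil : G.Walk u u) = 1 := rfl

@[simp]
lemma wsign_cons {u v w : V} (h : G.Adj u v) (p : G.Walk v w) :
    wsign σ (cons h p) = σ s(u, v) * wsign σ p := by
  simp [wsign]

@[simp]
lemma wsign_append {u v w : V} (p : G.Walk u v) (q : G.Walk v w) :
    wsign σ (p.append q) = wsign σ p * wsign σ q := by
  simp [wsign, edges_append]

lemma wsign_eq_of_perm {u v u' v' : V} {p : G.Walk u v} {q : G.Walk u' v'}
    (h : p.edges.Perm q.edges) : wsign σ p = wsign σ q :=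
  (h.map σ).prod_eq

@[simp]
lemma wsign_reverse {u v : V} (p : G.Walk u v) : wsign σ p.reverse = wsign σ p :=
  wsign_eq_of_perm σ (by simp [List.reverse_perm])

@[simp]
lemma wsign_transfer {H : SimpleGraph V} {u v : V} (p : G.Walk u v)
    (hp : ∀ e ∈ p.edges, e ∈ H.edgeSet) : wsign σ (p.transfer H hp) = wsign σ p := by
  simp [wsign, edges_transfer]

lemma esign_toFinset_edges [DecidableEq V] {u v : V} {p : G.Walk u v} (hp : p.IsTrail) :
    esign σ p.edges.toFinset = wsign σ p :=
  List.prod_toFinset σ hp.edges_nodup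

@[simp]
lemma switchSign_mk (ζ : V → ℤˣ) (x y : V) :
    switchSign σ ζ s(x, y) = ζ x * σ s(x, y) * ζ y := rfl

lemma wsign_switchSign (ζ : V → ℤˣ) {u v : V} (p : G.Walk u v) :
    wsign (switchSign σ ζ) p = ζ u * wsign σ p * ζ v := by
  induction p with
  | nil => simp [Int.units_mul_self]
  | cons h p ih =>
    simp only [wsign_cons, ih, switchSign_mk]
    simp only [mul_assoc, mul_left_comm, units_mul_self_mul]

lemma esign_switchSign_of_isCircleOf [DecidableEq V] (ζ : V → ℤˣ) {s : Finset (Sym2 V)}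
    (hs : IsCircleOf G s) : esign (switchSign σ ζ) s = esign σ s := by
  obtain ⟨z, w, hw, rfl⟩ := hs
  rw [esign_toFinset_edges _ hw.isTrail, esign_toFinset_edges _ hw.isTrail, wsign_switchSign,
    mul_comm, ← mul_assoc, Int.units_mul_self, one_mul]

/-- A closed walk splits into cycles and edges traversed back and forth. -/
lemma wsign_eq_one_of_forall_isCycle
    (hcyc : ∀ (x : V) (c : G.Walk x x), c.IsCycle → wsign σ c = 1) {u : V} (w : G.Walk u u) :
    wsign σ w = 1 := by
  induction hn : w.length using Nat.strong_induction_on generalizing u with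
  | _ n ih =>
  cases w with
  | nil => rfl
  | @cons _ v _ h q =>
    by_cases hq : q.IsPath
    · by_cases he : s(u, v) ∈ q.edges
      · rw [hq.eq_adj_toWalk_of_mem_edges (Sym2.eq_swap ▸ he)]
        simp [Sym2.eq_swap, Int.units_mul_self]
      · exact hcyc u _ ((cons_isCycle_iff q h).mpr ⟨hq, he⟩)
    · obtain ⟨x, c, ⟨r₁, r₂, rfl⟩, hc⟩ :
          ∃ (x : V) (c : G.Walk x x), c.IsSubwalk q ∧ ¬c.Nil := by
        simpa [isPath_iff_isSubwalk_imp_nil] using hq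
      have hlen := c.not_nil_iff_lt_length.mp hc
      subst hn
      have h₁ := ih _ (by simp; omega) (cons h (r₁.append r₂)) rfl
      have h₂ := ih _ (by simp; omega) c rfl
      simp only [wsign_cons, wsign_append] at h₁ ⊢
      rw [h₂, mul_one, h₁]

lemma wsign_eq_of_forall_isCycle (hcyc : ∀ (x : V) (c : G.Walk x x), c.IsCycle → wsign σ c = 1)
    {u v : V} (p q : G.Walk u v) : wsign σ p = wsign σ q := by
  have h := wsign_eq_one_of_forall_isCycle σ hcyc (p.append q.reverse)
  rw [wsign_append, wsign_reverse] at h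
  rw [← mul_one (wsign σ p), ← Int.units_mul_self (wsign σ q), ← mul_assoc, h, one_mul]

end SignedWalks

namespace SimpleGraph.Walk

variable {V : Type*} {G : SimpleGraph V}

lemma IsPath.edges_eq_singleton {u v : V} {p : G.Walk u v} (hp : p.IsPath)
    (h : s(u, v) ∈ p.edges) : p.edges = [s(u, v)] := by
  rw [hp.eq_adj_toWalk_of_mem_edges h]
  simp

lemma IsCycle.exists_isPath_of_mem_edges [DecidableEq V] {z a b : V} {c : G.Walk z z}
    (hc : c.IsCycle) (he : s(a, b) ∈ c.edges) :
    ∃ p : G.Walk a b, p.IsPath ∧ s(a, b) ∉ p.edges ∧ c.edges.Perm (s(a, b) :: p.edges) := by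
  have ha : a ∈ c.support := c.fst_mem_support_of_mem_edges he
  have hperm : c.edges.Perm (c.rotate a ha).edges := (c.rotate_edges a ha).perm.symm
  have hc' : (c.rotate a ha).IsCycle := hc.rotate ha
  have hb : b ∈ (c.rotate a ha).support :=
    (c.rotate a ha).snd_mem_support_of_mem_edges (hperm.subset he)
  obtain ⟨T, D, hTD⟩ := mem_support_iff_exists_append.mp hb
  rw [hTD] at hc' hperm
  have hab : a ≠ b := (c.adj_of_mem_edges he).ne
  have hT : T.IsPath := hc'.isPath_of_append_left (not_nil_of_ne hab.symm)
  have hD : D.IsPath := hc'.isPath_of_append_right (not_nil_of_ne hab)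
  have hnd : (T.edges ++ D.edges).Nodup := edges_append T D ▸ hc'.edges_nodup
  rw [edges_append] at hperm
  rcases List.mem_append.mp (hperm.subset he) with heT | heD
  · refine ⟨D.reverse, hD.reverse, ?_, ?_⟩
    · simpa using List.disjoint_of_nodup_append hnd heT
    · rw [hT.edges_eq_singleton heT] at hperm
      simpa using hperm.trans ((List.reverse_perm _).symm.cons _)
  · rw [Sym2.eq_swap] at heD
    refine ⟨T, hT, fun heT => List.disjoint_of_nodup_append hnd heT (Sym2.eq_swap ▸ heD), ?_⟩
    rw [hD.edges_eq_singleton heD, Sym2.eq_swap] at hperm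
    exact hperm.trans (List.perm_append_singleton _ _)

lemma exists_eq_append_of_first_mem {u v : V} (S : Set V) (p : G.Walk u v)
    (h : ∃ t ∈ p.support, t ∈ S) :
    ∃ x ∈ S, ∃ (q : G.Walk u x) (r : G.Walk x v), p = q.append r ∧
      ∀ t ∈ q.support, t ∈ S → t = x := by
  induction p with
  | nil =>
    obtain ⟨t, ht, htS⟩ := h
    rw [support_nil, List.mem_singleton] at ht
    subst ht
    exact ⟨t, htS, nil, nil, rfl, by simp⟩
  | @cons u w v hadj p ih =>
    by_cases huS : u ∈ S
    · exact ⟨u, huS, nil, cons hadj p, rfl, by simp⟩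
    · obtain ⟨x, hxS, q, r, rfl, hq⟩ := ih (by simpa [huS] using h)
      refine ⟨x, hxS, cons hadj q, r, rfl, ?_⟩
      simp only [support_cons, List.mem_cons, forall_eq_or_imp]
      exact ⟨fun huS' => absurd huS' huS, hq⟩

lemma exists_eq_append_of_last_mem {u v : V} (S : Set V) (p : G.Walk u v)
    (h : ∃ t ∈ p.support, t ∈ S) :
    ∃ y ∈ S, ∃ (r : G.Walk u y) (q : G.Walk y v), p = r.append q ∧
      ∀ t ∈ q.support, t ∈ S → t = y := by
  obtain ⟨y, hyS, q, r, hp, hq⟩ := p.reverse.exists_eq_append_of_first_mem S (by simpa using h)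
  refine ⟨y, hyS, r.reverse, q.reverse, ?_, by simpa using hq⟩
  rw [← reverse_append, ← hp, reverse_reverse]

lemma IsPath.append_of_forall_mem_support {u v w : V} {p : G.Walk u v}
    {q : G.Walk v w} (hp : p.IsPath) (hq : q.IsPath)
    (h : ∀ t ∈ p.support, t ∈ q.support → t = v) : (p.append q).IsPath := by
  rw [isPath_def, support_append, List.nodup_append]
  refine ⟨hp.support_nodup, hq.support_nodup.sublist (List.tail_sublist _), ?_⟩
  rintro t htp _ htq rfl
  have hvq : v ∉ q.support.tail := by
    have := hq.support_nodup
    rw [← cons_tail_support] at this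
    exact (List.nodup_cons.mp this).1
  exact hvq (h t htp (List.mem_of_mem_tail htq) ▸ htq)

lemma IsCycle.exists_arcs [DecidableEq V] {z x y : V} {c : G.Walk z z} (hc : c.IsCycle)
    (hx : x ∈ c.support) (hy : y ∈ c.support) (hxy : x ≠ y) :
    ∃ A₁ A₂ : G.Walk x y, A₁.IsPath ∧ A₂.IsPath ∧
      c.edges.Perm (A₁.edges ++ A₂.edges) ∧
      ∀ t ∈ A₁.support ++ A₂.support, t ∈ c.support := by
  obtain ⟨A₁, A₂, hA⟩ :=
    mem_support_iff_exists_append.mp ((mem_support_rotate_iff c x hx).mpr hy)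
  have hc' : (A₁.append A₂).IsCycle := hA ▸ hc.rotate hx
  refine ⟨A₁, A₂.reverse, hc'.isPath_of_append_left (not_nil_of_ne hxy.symm),
    (hc'.isPath_of_append_right (not_nil_of_ne hxy)).reverse, ?_, ?_⟩
  · have hperm := (c.rotate_edges x hx).perm.symm
    rw [hA, edges_append] at hperm
    simpa using hperm.trans ((List.reverse_perm _).symm.append_left _)
  · intro t ht
    rw [← mem_support_rotate_iff c x hx, hA, mem_support_append_iff]
    simpa using ht

lemma IsCycle.exists_isPath_pair_of_mem_support [DecidableEq V] (σ : Sym2 V → ℤˣ)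
    {z a b v₁ v₂ : V} {c : G.Walk z z} (hc : c.IsCycle) {p : G.Walk a b} (hp : p.IsPath)
    (hv : v₁ ≠ v₂) (h₁ : v₁ ∈ p.support) (h₂ : v₂ ∈ p.support)
    (h₁c : v₁ ∈ c.support) (h₂c : v₂ ∈ c.support) :
    ∃ P₁ P₂ : G.Walk a b, P₁.IsPath ∧ P₂.IsPath ∧
      (∀ f ∈ P₁.edges ++ P₂.edges, f ∈ p.edges ∨ f ∈ c.edges) ∧
      wsign σ P₁ * wsign σ P₂ = wsign σ c := by
  obtain ⟨x, hxc, q₁, r, rfl, hq₁⟩ :=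
    p.exists_eq_append_of_first_mem {t | t ∈ c.support} ⟨v₁, h₁, h₁c⟩
  obtain ⟨y, hyc, m, q₂, rfl, hq₂⟩ :=
    r.exists_eq_append_of_last_mem {t | t ∈ c.support} ⟨x, r.start_mem_support, hxc⟩
  have hxy : x ≠ y := by
    rintro rfl
    have hm : m.Nil := isPath_iff_nil.mp hp.of_append_right.of_append_left
    have hsupp : ∀ t ∈ (q₁.append (m.append q₂)).support, t ∈ c.support → t = x := by
      intro t ht htc
      rcases (mem_support_append_iff _ _).mp ht with ht | ht
      · exact hq₁ t ht htc
      rcases (mem_support_append_iff _ _).mp ht with ht | ht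
      · simpa [nil_iff_support_eq.mp hm] using ht
      · exact hq₂ t ht htc
    exact hv ((hsupp v₁ h₁ h₁c).trans (hsupp v₂ h₂ h₂c).symm)
  have hdisj : ∀ t ∈ q₁.support, t ∉ q₂.support := by
    intro t ht ht'
    have htx : t ≠ x := by
      rintro rfl
      exact hxy (hq₂ t ht' hxc)
    exact hp.ne_of_mem_support_of_append htx ht
      ((mem_support_append_iff _ _).mpr (.inr ht')) rfl
  have hpath : ∀ A : G.Walk x y, A.IsPath → (∀ t ∈ A.support, t ∈ c.support) →
      (q₁.append (A.append q₂)).IsPath := by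
    intro A hA hAc
    refine hp.of_append_left.append_of_forall_mem_support
      (hA.append_of_forall_mem_support hp.of_append_right.of_append_right
        fun t htA htq => hq₂ t htq (hAc t htA)) fun t ht ht' => ?_
    rcases (mem_support_append_iff _ _).mp ht' with ht' | ht'
    · exact hq₁ t ht (hAc t ht')
    · exact absurd ht' (hdisj t ht)
  obtain ⟨A₁, A₂, hA₁, hA₂, hperm, hAc⟩ := hc.exists_arcs hxc hyc hxy
  refine ⟨_, _, hpath A₁ hA₁ fun t ht => hAc t (List.mem_append_left _ ht),
    hpath A₂ hA₂ fun t ht => hAc t (List.mem_append_right _ ht), ?_, ?_⟩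
  · intro f hf
    have hfc : f ∈ A₁.edges ∨ f ∈ A₂.edges → f ∈ c.edges := fun h =>
      hperm.symm.subset (List.mem_append.mpr h)
    simp only [edges_append, List.mem_append] at hf ⊢
    tauto
  · have hc : wsign σ c = wsign σ A₁ * wsign σ A₂ := by
      simp [wsign, (hperm.map σ).prod_eq]
    calc _ = (wsign σ q₁ * wsign σ q₁) * (wsign σ q₂ * wsign σ q₂) *
          (wsign σ A₁ * wsign σ A₂) := by
          simp only [wsign_append]; ac_rfl
      _ = wsign σ c := by rw [Int.units_mul_self, Int.units_mul_self, one_mul, one_mul, hc]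

end SimpleGraph.Walk

section Block

open Walk

variable {V : Type*} [DecidableEq V] {G : SimpleGraph V} {σ : Sym2 V → ℤˣ}

lemma IsCircleOf.mem_edgeSet {s : Finset (Sym2 V)} (hs : IsCircleOf G s) {f : Sym2 V}
    (hf : f ∈ s) : f ∈ G.edgeSet := by
  obtain ⟨z, w, -, rfl⟩ := hs
  exact w.edges_subset_edgeSet (List.mem_toFinset.mp hf)

lemma isCircleOf_insert_of_isPath {a b : V} (hab : G.Adj a b) {p : G.Walk a b} (hp : p.IsPath)
    (he : s(a, b) ∉ p.edges) : IsCircleOf G (insert s(a, b) p.edges.toFinset) :=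
  ⟨b, cons hab.symm p, (cons_isCycle_iff p hab.symm).mpr ⟨hp, Sym2.eq_swap ▸ he⟩,
    by simp [Sym2.eq_swap]⟩

lemma mem_edgeSet_blockOf {e f : Sym2 V} :
    f ∈ (blockOf G e).edgeSet ↔
      f ∈ G.edgeSet ∧ (f = e ∨ ∃ s, IsCircleOf G s ∧ e ∈ s ∧ f ∈ s) := by
  induction f using Sym2.ind with
  | _ x y => exact Iff.rfl

lemma mem_edgeSet_blockOf_of_isPath {a b : V} (hab : G.Adj a b) {p : G.Walk a b} (hp : p.IsPath)
    (he : s(a, b) ∉ p.edges) {f : Sym2 V} (hf : f ∈ p.edges) :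
    f ∈ (blockOf G s(a, b)).edgeSet :=
  mem_edgeSet_blockOf.mpr ⟨p.edges_subset_edgeSet hf,
    .inr ⟨_, isCircleOf_insert_of_isPath hab hp he, Finset.mem_insert_self _ _,
      Finset.mem_insert_of_mem (List.mem_toFinset.mpr hf)⟩⟩

lemma exists_isPath_of_mem_edgeSet_blockOf {a b : V} {f : Sym2 V}
    (hf : f ∈ (blockOf G s(a, b)).edgeSet) (hfe : f ≠ s(a, b)) :
    ∃ p : G.Walk a b, p.IsPath ∧ s(a, b) ∉ p.edges ∧ f ∈ p.edges := by
  obtain ⟨-, hfe' | ⟨-, ⟨z, c, hc, rfl⟩, hec, hfc⟩⟩ := mem_edgeSet_blockOf.mp hf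
  · exact absurd hfe' hfe
  obtain ⟨p, hp, hpe, hperm⟩ := hc.exists_isPath_of_mem_edges (List.mem_toFinset.mp hec)
  refine ⟨p, hp, hpe, ?_⟩
  simpa [hfe] using hperm.subset (List.mem_toFinset.mp hfc)

lemma mul_wsign_eq_neg_one_of_isPath {a b : V} (hab : G.Adj a b)
    (hneg : ∀ s, IsCircleOf G s → s(a, b) ∈ s → esign σ s = -1) {p : G.Walk a b}
    (hp : p.IsPath) (he : s(a, b) ∉ p.edges) : σ s(a, b) * wsign σ p = -1 := by
  have h := hneg _ (isCircleOf_insert_of_isPath hab hp he) (Finset.mem_insert_self _ _)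
  rwa [esign, Finset.prod_insert (by simpa using he), ← esign, esign_toFinset_edges _ hp.isTrail]
    at h

lemma wsign_eq_one_of_isCycle_of_isPath {a b z v₁ v₂ : V}
    (hneg : ∀ p : G.Walk a b, p.IsPath → s(a, b) ∉ p.edges → σ s(a, b) * wsign σ p = -1)
    {c : G.Walk z z} (hc : c.IsCycle) (hce : s(a, b) ∉ c.edges) {p : G.Walk a b}
    (hp : p.IsPath) (hpe : s(a, b) ∉ p.edges) (hv : v₁ ≠ v₂) (h₁ : v₁ ∈ p.support)
    (h₂ : v₂ ∈ p.support) (h₁c : v₁ ∈ c.support) (h₂c : v₂ ∈ c.support) :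
    wsign σ c = 1 := by
  obtain ⟨P₁, P₂, hP₁, hP₂, hPe, hsign⟩ :=
    hc.exists_isPath_pair_of_mem_support σ hp hv h₁ h₂ h₁c h₂c
  have hPe' : ∀ f ∈ P₁.edges ++ P₂.edges, f ≠ s(a, b) := fun f hf hfe =>
    (hPe f hf).elim (fun h => hpe (hfe ▸ h)) (fun h => hce (hfe ▸ h))
  calc wsign σ c = (σ s(a, b) * wsign σ P₁) * (σ s(a, b) * wsign σ P₂) := by
        rw [← hsign, mul_mul_mul_comm, Int.units_mul_self, one_mul]
    _ = 1 := by
        rw [hneg P₁ hP₁ fun h => hPe' _ (List.mem_append_left _ h) rfl,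
          hneg P₂ hP₂ fun h => hPe' _ (List.mem_append_right _ h) rfl]
        rfl

lemma wsign_eq_one_of_isCycle_deleteEdges_blockOf {a b x : V}
    (hneg : ∀ p : G.Walk a b, p.IsPath → s(a, b) ∉ p.edges → σ s(a, b) * wsign σ p = -1)
    {c : ((blockOf G s(a, b)).deleteEdges {s(a, b)}).Walk x x} (hc : c.IsCycle) :
    wsign σ c = 1 := by
  have hcB : ∀ f ∈ c.edges, f ∈ (blockOf G s(a, b)).edgeSet ∧ f ≠ s(a, b) :=
    fun f hf => by simpa using c.edges_subset_edgeSet hf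
  have hcG : ∀ f ∈ c.edges, f ∈ G.edgeSet :=
    fun f hf => (mem_edgeSet_blockOf.mp (hcB f hf).1).1
  obtain ⟨y, hxy, q, rfl⟩ := not_nil_iff.mp hc.not_nil
  obtain ⟨p, hp, hpe, hxyp⟩ := exists_isPath_of_mem_edgeSet_blockOf (hcB s(x, y) (by simp)).1
    (hcB s(x, y) (by simp)).2
  have hxyc : s(x, y) ∈ ((cons hxy q).transfer G hcG).edges := by rw [edges_transfer]; simp
  rw [← wsign_transfer σ _ hcG]
  refine wsign_eq_one_of_isCycle_of_isPath hneg (hc.transfer hcG) ?_ hp hpe hxy.ne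
    (p.fst_mem_support_of_mem_edges hxyp) (p.snd_mem_support_of_mem_edges hxyp)
    (fst_mem_support_of_mem_edges _ hxyc) (snd_mem_support_of_mem_edges _ hxyc)
  rw [edges_transfer]
  exact fun h => (hcB _ h).2 rfl

lemma isBalancingEdge_blockOf {a b : V} (hab : G.Adj a b) {P : G.Walk a b} (hP : P.IsPath)
    (hPe : s(a, b) ∉ P.edges)
    (hneg : ∀ p : G.Walk a b, p.IsPath → s(a, b) ∉ p.edges → σ s(a, b) * wsign σ p = -1) :
    IsBalancingEdge (blockOf G s(a, b)) σ s(a, b) := by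
  set H := (blockOf G s(a, b)).deleteEdges {s(a, b)}
  have hH : ∀ {p : G.Walk a b}, p.IsPath → s(a, b) ∉ p.edges →
      ∀ f ∈ p.edges, f ∈ H.edgeSet := fun hp hpe f hf => by
      rw [edgeSet_deleteEdges]
      exact ⟨mem_edgeSet_blockOf_of_isPath hab hp hpe hf, fun h => hpe (h ▸ hf)⟩
  classical
  let ζ : V → ℤˣ := fun v => if h : H.Reachable a v then wsign σ h.some else 1
  have hζ : ∀ {v : V} (w : H.Walk a v), ζ v = wsign σ w := fun w =>
    (dif_pos ⟨w⟩).trans <| wsign_eq_of_forall_isCycle σ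
      (fun _ _ => wsign_eq_one_of_isCycle_deleteEdges_blockOf hneg) _ _
  refine ⟨mem_edgeSet_blockOf.mpr ⟨hab, .inl rfl⟩, ζ, fun f hf => ?_⟩
  induction f using Sym2.ind with
  | _ x y =>
  by_cases hfe : s(x, y) = s(a, b)
  · rw [hfe, switchSign_mk, hζ nil, hζ (P.transfer H (hH hP hPe))]
    simpa using hneg P hP hPe
  · obtain ⟨p, hp, hpe, hxy⟩ := exists_isPath_of_mem_edgeSet_blockOf hf hfe
    have hx : x ∈ p.support := p.fst_mem_support_of_mem_edges hxy
    let W : H.Walk a x := (p.takeUntil x hx).transfer H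
      fun f hf => hH hp hpe f (p.edges_takeUntil_subset_edges hx hf)
    have hxyH : H.Adj x y := hH hp hpe _ hxy
    refine iff_of_false ?_ hfe
    rw [switchSign_mk, hζ W, hζ (W.append (cons hxyH nil))]
    simp [mul_assoc, mul_left_comm, Int.units_mul_self]

lemma esign_eq_neg_one_of_isBalancingEdge_blockOf {e : Sym2 V}
    (hb : IsBalancingEdge (blockOf G e) σ e) {s : Finset (Sym2 V)} (hs : IsCircleOf G s)
    (hes : e ∈ s) : esign σ s = -1 := by
  obtain ⟨heB, ζ, hζ⟩ := hb
  rw [← esign_switchSign_of_isCircleOf σ ζ hs, esign, Finset.prod_eq_single_of_mem e hes]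
  · exact (hζ e heB).mpr rfl
  · intro f hfs hfe
    have hfB : f ∈ (blockOf G e).edgeSet :=
      mem_edgeSet_blockOf.mpr ⟨hs.mem_edgeSet hfs, .inr ⟨s, hs, hes, hfs⟩⟩
    exact (Int.units_eq_one_or _).resolve_right (mt (hζ f hfB).mp hfe)

end Block

theorem only_negative_circles_iff_balancing_in_block {V : Type*} [DecidableEq V]
    (G : SimpleGraph V) (σ : Sym2 V → ℤˣ) (e : Sym2 V)
    (he : ∃ s : Finset (Sym2 V), IsCircleOf G s ∧ e ∈ s) :
    (∀ s : Finset (Sym2 V), IsCircleOf G s → e ∈ s → esign σ s = -1) ↔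
      IsBalancingEdge (blockOf G e) σ e := by
  induction e using Sym2.ind with
  | _ a b =>
  obtain ⟨-, ⟨z, w, hw, rfl⟩, he⟩ := he
  have hab : G.Adj a b := w.adj_of_mem_edges (List.mem_toFinset.mp he)
  obtain ⟨P, hP, hPe, -⟩ := hw.exists_isPath_of_mem_edges (List.mem_toFinset.mp he)
  exact ⟨fun hneg => isBalancingEdge_blockOf hab hP hPe
      fun _ => mul_wsign_eq_neg_one_of_isPath hab hneg,
    fun hb _ => esign_eq_neg_one_of_isBalancingEdge_blockOf hb⟩
end

section
/- Let v be a vertex of a signed graph Σ contained in an unbalanced block B with deg_B(v) ≥ 3. Then v lies in at least two negative circles; in particular, v is not contained in a unique negative circle. -/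
open SimpleGraph Finset

variable {V : Type*} [DecidableEq V]

/-! Negativity spreads along the edges of a block. If `x` lies on a negative circle `C` and `xy`
is an edge off `C`, then, `x` not being a cutpoint, some path from `y` reaches `C` without passing
through `x`; with `C` and the edge `xy` it forms a theta graph, two of whose circles run through `xy`
and have signs multiplying to the sign of `C`, so one of them is negative. Hence the vertex `v` lies
on a negative circle `C`, and since at most two of its at least three edges lie on `C`, a third edge
carries a second negative circle, which differs from `C`. -/

def IsNegCircleThrough (G : SimpleGraph V) (σ : Sym2 V → ℤˣ) (v : V) (s : Finset (Sym2 V)) :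
    Prop :=
  IsCircleOf G s ∧ (∃ e ∈ s, v ∈ e) ∧ esign σ s = -1

def LiesOnNegCycle (G : SimpleGraph V) (σ : Sym2 V → ℤˣ) (v : V) : Prop :=
  ∃ c : G.Walk v v, c.IsCycle ∧ wsign σ c = -1

namespace SimpleGraph.Walk

variable {G : SimpleGraph V} {σ : Sym2 V → ℤˣ}

section

omit [DecidableEq V]

@[simp]
lemma wsign_append {x y z : V} (p : G.Walk x y) (q : G.Walk y z) :
    wsign σ (p.append q) = wsign σ p * wsign σ q := by
  simp [wsign]

@[simp]
lemma wsign_reverse {x y : V} (p : G.Walk x y) : wsign σ p.reverse = wsign σ p := by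
  rw [wsign, wsign, edges_reverse, List.map_reverse, List.prod_reverse]

/-- The signs of the three circles of a theta graph multiply to `1`. -/
lemma wsign_append_mul_wsign_append_reverse {x d : V} (a t : G.Walk x d) (r : G.Walk d x) :
    wsign σ (a.append r) * wsign σ (a.append t.reverse) = wsign σ (t.append r) := by
  simp only [wsign_append, wsign_reverse]
  calc wsign σ a * wsign σ r * (wsign σ a * wsign σ t)
      = (wsign σ a * wsign σ a) * (wsign σ t * wsign σ r) := by ac_rfl
    _ = wsign σ t * wsign σ r := by rw [Int.units_mul_self, one_mul]

lemma IsPath.append_of_support_inter {a b c : V} {p : G.Walk a b} {r : G.Walk b c}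
    (hp : p.IsPath) (hr : r.IsPath) (h : ∀ z ∈ p.support, z ∈ r.support → z = b) :
    (p.append r).IsPath := by
  rw [isPath_def, support_append, List.nodup_append]
  refine ⟨hp.support_nodup, hr.support_nodup.sublist r.support.tail_sublist, ?_⟩
  rintro z hz _ hz' rfl
  obtain rfl := h z hz (List.mem_of_mem_tail hz')
  have hr' := hr.support_nodup
  rw [← r.cons_tail_support] at hr'
  exact (List.nodup_cons.mp hr').1 hz'

lemma isCycle_cons_append {x y d : V} (hadj : G.Adj x y) {q : G.Walk y d} {r : G.Walk d x}
    (hq : q.IsPath) (hr : r.IsPath) (hqr : ∀ z ∈ q.support, z ∈ r.support → z = d)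
    (hxq : x ∉ q.support) (he : s(x, y) ∉ r.edges) : (cons hadj (q.append r)).IsCycle := by
  refine (cons_isCycle_iff _ hadj).mpr ⟨hq.append_of_support_inter hr hqr, ?_⟩
  rw [edges_append, List.mem_append, not_or]
  exact ⟨fun h => hxq (q.fst_mem_support_of_mem_edges h), he⟩

lemma IsCycle.exists_adj_notMem_edges {u v : V} {c : G.Walk u u} (hc : c.IsCycle)
    (hv : v ∈ c.support) (hdeg : 3 ≤ {w | G.Adj v w}.ncard) :
    ∃ w, G.Adj v w ∧ s(v, w) ∉ c.edges := by
  by_contra! h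
  have hsub : {w | G.Adj v w} ⊆ c.toSubgraph.neighborSet v := fun w hw =>
    adj_toSubgraph_iff_mem_edges.mpr (h w hw)
  have htwo := hc.ncard_neighborSet_toSubgraph_eq_two hv
  have := Set.ncard_le_ncard hsub (Set.finite_of_ncard_ne_zero (by omega))
  omega

end

lemma wsign_rotate {x y : V} {c : G.Walk x x} (h : y ∈ c.support) :
    wsign σ (c.rotate y h) = wsign σ c :=
  ((c.rotate_edges y h).perm.map σ).prod_eq

lemma IsTrail.esign_edges_toFinset {x y : V} {p : G.Walk x y} (hp : p.IsTrail) :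
    esign σ p.edges.toFinset = wsign σ p :=
  List.prod_toFinset σ hp.edges_nodup

lemma IsCycle.isNegCircleThrough_edges_toFinset {v : V} {c : G.Walk v v} (hc : c.IsCycle)
    (hneg : wsign σ c = -1) : IsNegCircleThrough G σ v c.edges.toFinset :=
  ⟨⟨v, c, hc, rfl⟩, ⟨_, List.mem_toFinset.mpr (mk_start_snd_mem_edges hc.not_nil),
    Sym2.mem_mk_left _ _⟩, hc.isCircuit.isTrail.esign_edges_toFinset.trans hneg⟩

lemma IsCycle.exists_wsign_neg_of_isPath {x y d : V} {c : G.Walk x x} (hc : c.IsCycle)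
    (hneg : wsign σ c = -1) (hadj : G.Adj x y) (he : s(x, y) ∉ c.edges) (hd : d ∈ c.support)
    {q : G.Walk y d} (hq : q.IsPath) (hxq : x ∉ q.support)
    (hqc : ∀ z ∈ q.support, z ∈ c.support → z = d) :
    ∃ D : G.Walk x x, D.IsCycle ∧ s(x, y) ∈ D.edges ∧ wsign σ D = -1 := by
  set t := c.takeUntil d hd
  set r := c.dropUntil d hd
  have hct : t.append r = c := c.take_spec hd
  have hdx : d ≠ x := fun h => hxq (h ▸ q.end_mem_support)
  have ht : t.IsPath := hc.isPath_takeUntil hd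
  have hr : r.IsPath := (hct ▸ hc).isPath_of_append_right fun h => hdx h.eq.symm
  have hcyc₁ : (cons hadj (q.append r)).IsCycle :=
    isCycle_cons_append hadj hq hr
      (fun z hz hz' => hqc z hz (c.support_dropUntil_subset_support hd hz'))
      hxq fun h => he (c.edges_dropUntil_subset_edges hd h)
  have hcyc₂ : (cons hadj (q.append t.reverse)).IsCycle := by
    refine isCycle_cons_append hadj hq ht.reverse (fun z hz hz' => hqc z hz ?_) hxq ?_
    · exact c.support_takeUntil_subset_support hd (by simpa using hz')
    · rw [edges_reverse, List.mem_reverse]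
      exact fun h => he (c.edges_takeUntil_subset_edges hd h)
  have hprod : wsign σ (cons hadj (q.append r)) * wsign σ (cons hadj (q.append t.reverse)) =
      -1 := by
    rw [← hneg, ← hct]
    exact wsign_append_mul_wsign_append_reverse (cons hadj q) t r
  rcases Int.units_eq_one_or (wsign σ (cons hadj (q.append r))) with h₁ | h₁
  · exact ⟨_, hcyc₂, by simp, by rwa [h₁, one_mul] at hprod⟩
  · exact ⟨_, hcyc₁, by simp, h₁⟩

lemma exists_isPath_to_first_mem {u t : V} {S : Set V} (W : G.Walk u t) (ht : t ∈ S) :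
    ∃ d ∈ S, ∃ q : G.Walk u d, q.IsPath ∧ q.support ⊆ W.support ∧
      ∀ z ∈ q.support, z ∈ S → z = d := by
  suffices ∃ d ∈ S, ∃ q : G.Walk u d, q.support ⊆ W.support ∧ ∀ z ∈ q.support, z ∈ S → z = d by
    obtain ⟨d, hd, q, hqW, hqS⟩ := this
    exact ⟨d, hd, q.bypass, q.bypass_isPath, fun z hz => hqW (q.support_bypass_subset_support hz),
      fun z hz => hqS z (q.support_bypass_subset_support hz)⟩
  induction W with
  | nil => exact ⟨_, ht, nil, by simp, by simp⟩
  | @cons u m t h W ih =>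
    by_cases hu : u ∈ S
    · exact ⟨u, hu, nil, by simp, by simp⟩
    obtain ⟨d, hd, q, hqW, hqS⟩ := ih ht
    refine ⟨d, hd, cons h q, ?_, ?_⟩
    · rw [support_cons, support_cons]
      exact List.cons_subset_cons _ hqW
    · simp only [support_cons, List.mem_cons, forall_eq_or_imp]
      exact ⟨fun h => absurd h hu, hqS⟩

end SimpleGraph.Walk

lemma liesOnNegCycle_of_mem_support {G : SimpleGraph V} {σ : Sym2 V → ℤˣ} {u v : V}
    {c : G.Walk u u} (hc : c.IsCycle) (hneg : wsign σ c = -1) (hv : v ∈ c.support) :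
    LiesOnNegCycle G σ v :=
  ⟨c.rotate v hv, hc.rotate hv, (Walk.wsign_rotate hv).trans hneg⟩

namespace IsBlock

variable {G : SimpleGraph V} {σ : Sym2 V → ℤˣ}

lemma exists_isPath_avoiding_to_first_mem (hB : IsBlock G) {x y b : V} {S : Set V}
    (hb : b ∈ S) (hbx : b ≠ x) (hyx : y ≠ x) :
    ∃ d ∈ S, ∃ q : G.Walk y d, q.IsPath ∧ x ∉ q.support ∧ ∀ z ∈ q.support, z ∈ S → z = d := by
  obtain ⟨W⟩ := (hB.2 x).preconnected ⟨y, by simpa using hyx⟩ ⟨b, by simpa using hbx⟩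
  have hxW : x ∉ (W.map (Subgraph.hom _)).support := by
    rw [Walk.support_map]
    intro hmem
    obtain ⟨z, -, hz⟩ := List.mem_map.mp hmem
    exact z.2.2 hz
  obtain ⟨d, hd, q, hq, hqW, hqS⟩ := (W.map (Subgraph.hom _)).exists_isPath_to_first_mem hb
  exact ⟨d, hd, q, hq, fun h => hxW (hqW h), hqS⟩

lemma exists_isCycle_mem_edges_wsign_neg (hB : IsBlock G) {x y : V} {c : G.Walk x x}
    (hc : c.IsCycle) (hneg : wsign σ c = -1) (hadj : G.Adj x y) (he : s(x, y) ∉ c.edges) :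
    ∃ D : G.Walk x x, D.IsCycle ∧ s(x, y) ∈ D.edges ∧ wsign σ D = -1 := by
  obtain ⟨d, hd, q, hq, hxq, hqc⟩ := hB.exists_isPath_avoiding_to_first_mem
    (S := {z | z ∈ c.support}) (c.getVert_mem_support 1) (c.adj_snd hc.not_nil).ne' hadj.ne'
  exact hc.exists_wsign_neg_of_isPath hneg hadj he hd hq hxq hqc

lemma liesOnNegCycle_of_adj (hB : IsBlock G) {x y : V} (hx : LiesOnNegCycle G σ x)
    (hadj : G.Adj x y) : LiesOnNegCycle G σ y := by
  obtain ⟨c, hc, hneg⟩ := hx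
  by_cases hy : y ∈ c.support
  · exact liesOnNegCycle_of_mem_support hc hneg hy
  obtain ⟨D, hD, hyD, hDneg⟩ := hB.exists_isCycle_mem_edges_wsign_neg hc hneg hadj
    fun h => hy (c.snd_mem_support_of_mem_edges h)
  exact liesOnNegCycle_of_mem_support hD hDneg (D.snd_mem_support_of_mem_edges hyD)

lemma liesOnNegCycle_of_reachable (hB : IsBlock G) {x y : V} (hx : LiesOnNegCycle G σ x)
    (h : G.Reachable x y) : LiesOnNegCycle G σ y := by
  obtain ⟨W⟩ := h
  induction W with
  | nil => exact hx
  | cons h _ ih => exact ih (hB.liesOnNegCycle_of_adj hx h)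

lemma liesOnNegCycle (hB : IsBlock G)
    (hunb : ∃ s : Finset (Sym2 V), IsCircleOf G s ∧ esign σ s = -1) (v : V) :
    LiesOnNegCycle G σ v := by
  obtain ⟨s, ⟨a, c, hc, rfl⟩, hneg⟩ := hunb
  have ha : LiesOnNegCycle G σ a := ⟨c, hc, hc.isCircuit.isTrail.esign_edges_toFinset ▸ hneg⟩
  exact hB.liesOnNegCycle_of_reachable ha (hB.1.preconnected a v)

end IsBlock

theorem degree_three_vertex_not_negative_battery {V : Type*} [DecidableEq V]
    (B : SimpleGraph V) (σ : Sym2 V → ℤˣ) (hB : IsBlock B)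
    -- the block `B` is unbalanced:
    (hunb : ∃ s : Finset (Sym2 V), IsCircleOf B s ∧ esign σ s = -1)
    (v : V) (hdeg : 3 ≤ {u : V | B.Adj v u}.ncard) :
    ∃ s₁ s₂ : Finset (Sym2 V), s₁ ≠ s₂ ∧
      (IsCircleOf B s₁ ∧ (∃ e ∈ s₁, v ∈ e) ∧ esign σ s₁ = -1) ∧
      (IsCircleOf B s₂ ∧ (∃ e ∈ s₂, v ∈ e) ∧ esign σ s₂ = -1) := by
  obtain ⟨c, hc, hneg⟩ := hB.liesOnNegCycle hunb v
  obtain ⟨u, hadj, hu⟩ := hc.exists_adj_notMem_edges c.start_mem_support hdeg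
  obtain ⟨D, hD, huD, hDneg⟩ := hB.exists_isCycle_mem_edges_wsign_neg hc hneg hadj hu
  have hne : c.edges.toFinset ≠ D.edges.toFinset := fun h =>
    hu (List.mem_toFinset.mp (h ▸ List.mem_toFinset.mpr huD))
  exact ⟨_, _, hne, hc.isNegCircleThrough_edges_toFinset hneg,
    hD.isNegCircleThrough_edges_toFinset hDneg⟩
end
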